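/- Let V be a nonempty finite type, let p : V → ℝ be a probability vector with p i > 0 for all i, and let α ∈ [0,1). The skew reverse KL objective q ↦ D_KL(q ‖ (1−α)·p + α·q) = Σ_{i ∈ V} q i · log( q i / ((1−α)·p i + α·q i) ) is convex on the interior of the probability simplex: for all full-support probability vectors q₀, q₁ and all t ∈ [0,1], its value at t·q₀ + (1−t)·q₁ is at most t times its value at q₀ plus (1−t) times its value at q₁. (This follows from the joint convexity of KL divergence and the fact that both arguments (q, (1−α)p + αq) depend affinely on q.) -/

import Mathlib

/-!
Since `(1 - α) p + α q` is affine in `q`, the objective is a sum over `i` of the jointly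
convex function `(x, y) ↦ x log (x / y)` (the perspective of `u ↦ u log u`) precomposed
with an affine map.
-/

open Finset Real

theorem convexOn_mul_log_div :
    ConvexOn ℝ (Set.Ici 0 ×ˢ Set.Ioi 0) fun z : ℝ × ℝ => z.1 * log (z.1 / z.2) := by
  refine ⟨(convex_Ici 0).prod (convex_Ioi 0), ?_⟩
  rintro ⟨x₀, y₀⟩ ⟨hx₀, hy₀⟩ ⟨x₁, y₁⟩ ⟨hx₁, hy₁⟩ a b ha hb hab
  simp only [Set.mem_Ici, Set.mem_Ioi] at hx₀ hy₀ hx₁ hy₁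
  simp only [Prod.smul_mk, Prod.mk_add_mk, smul_eq_mul]
  set y := a * y₀ + b * y₁
  have hy : 0 < y := (convex_Ioi (0 : ℝ)) hy₀ hy₁ ha hb hab
  -- `x log (x / y) = y f (x / y)` for `f u = u log u`; use convexity of `f` with weights `a y₀ / y`,
  -- `b y₁ / y` at the points `x₀ / y₀`, `x₁ / y₁`
  have key := convexOn_mul_log.2 (Set.mem_Ici.2 (div_nonneg hx₀ hy₀.le))
    (Set.mem_Ici.2 (div_nonneg hx₁ hy₁.le)) (by positivity : 0 ≤ a * y₀ / y)
    (by positivity : 0 ≤ b * y₁ / y) (by rw [← add_div]; exact div_self hy.ne')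
  simp only [smul_eq_mul] at key
  have hcombo : a * y₀ / y * (x₀ / y₀) + b * y₁ / y * (x₁ / y₁) = (a * x₀ + b * x₁) / y := by
    field_simp
  rw [hcombo] at key
  calc (a * x₀ + b * x₁) * log ((a * x₀ + b * x₁) / y)
      = y * ((a * x₀ + b * x₁) / y * log ((a * x₀ + b * x₁) / y)) := by field_simp
    _ ≤ y * (a * y₀ / y * (x₀ / y₀ * log (x₀ / y₀)) + b * y₁ / y * (x₁ / y₁ * log (x₁ / y₁))) :=
        mul_le_mul_of_nonneg_left key hy.le
    _ = a * (x₀ * log (x₀ / y₀)) + b * (x₁ * log (x₁ / y₁)) := by field_simp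

theorem convexOn_mul_log_div_skew {p α : ℝ} (hp : 0 < p) (hα₀ : 0 ≤ α) (hα₁ : α < 1) :
    ConvexOn ℝ (Set.Ici 0) fun x => x * log (x / ((1 - α) * p + α * x)) := by
  have hmix_pos : ∀ x ∈ Set.Ici (0 : ℝ), 0 < (1 - α) * p + α * x := fun x hx => by
    have : 0 < (1 - α) * p := mul_pos (sub_pos.2 hα₁) hp
    nlinarith [Set.mem_Ici.1 hx]
  refine ⟨convex_Ici 0, fun x hx y hy a b ha hb hab => ?_⟩
  have h := convexOn_mul_log_div.2 (Set.mk_mem_prod hx (hmix_pos x hx))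
    (Set.mk_mem_prod hy (hmix_pos y hy)) ha hb hab
  have hmix : a * ((1 - α) * p + α * x) + b * ((1 - α) * p + α * y)
      = (1 - α) * p + α * (a * x + b * y) := by
    linear_combination (1 - α) * p * hab
  simpa only [Prod.smul_mk, Prod.mk_add_mk, smul_eq_mul, hmix] using h

theorem srkl_convex_general {V : Type*} [Fintype V]
    (p : V → ℝ) (hp0 : ∀ i, 0 < p i)
    (α : ℝ) (hα0 : 0 ≤ α) (hα1 : α < 1) :
    ∀ q₀ q₁ : V → ℝ, (∀ i, 0 < q₀ i) → (∑ i, q₀ i = 1) →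
      (∀ i, 0 < q₁ i) → (∑ i, q₁ i = 1) → ∀ t : ℝ, 0 ≤ t → t ≤ 1 →
      (∑ i, (t * q₀ i + (1 - t) * q₁ i) *
          Real.log ((t * q₀ i + (1 - t) * q₁ i) /
            ((1 - α) * p i + α * (t * q₀ i + (1 - t) * q₁ i)))) ≤
        t * (∑ i, q₀ i * Real.log (q₀ i / ((1 - α) * p i + α * q₀ i))) +
          (1 - t) * (∑ i, q₁ i * Real.log (q₁ i / ((1 - α) * p i + α * q₁ i))) := by
  intro q₀ q₁ hq₀ _ hq₁ _ t ht0 ht1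
  rw [mul_sum, mul_sum, ← sum_add_distrib]
  refine sum_le_sum fun i _ => ?_
  exact (convexOn_mul_log_div_skew (hp0 i) hα0 hα1).2 (hq₀ i).le (hq₁ i).le ht0
    (sub_nonneg.2 ht1) (add_sub_cancel t 1)

/-- For a full-support teacher probability vector `p` and skew coefficient `α ∈ [0,1)`, the
skew reverse KL objective `q ↦ D_KL(q ‖ (1−α)·p + α·q)
= ∑ i, q i * log (q i / ((1 - α) * p i + α * q i))` is convex on the interior of the
probability simplex: for full-support probability vectors `q₀, q₁` and `t ∈ [0,1]`, its
value at `t·q₀ + (1−t)·q₁` is at most `t` times its value at `q₀` plus `(1−t)` times its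
value at `q₁`. -/
theorem srkl_convex {V : Type*} [Fintype V] [Nonempty V]
    (p : V → ℝ) (hp0 : ∀ i, 0 < p i) (hp1 : ∑ i, p i = 1)
    (α : ℝ) (hα0 : 0 ≤ α) (hα1 : α < 1) :
    ∀ q₀ q₁ : V → ℝ, (∀ i, 0 < q₀ i) → (∑ i, q₀ i = 1) →
      (∀ i, 0 < q₁ i) → (∑ i, q₁ i = 1) → ∀ t : ℝ, 0 ≤ t → t ≤ 1 →
      (∑ i, (t * q₀ i + (1 - t) * q₁ i) *
          Real.log ((t * q₀ i + (1 - t) * q₁ i) /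
            ((1 - α) * p i + α * (t * q₀ i + (1 - t) * q₁ i)))) ≤
        t * (∑ i, q₀ i * Real.log (q₀ i / ((1 - α) * p i + α * q₀ i))) +
          (1 - t) * (∑ i, q₁ i * Real.log (q₁ i / ((1 - α) * p i + α * q₁ i))) :=
  srkl_convex_general p hp0 α hα0 hα1
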